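/- arXiv:math/0603387 — 4 statements merged into one kernel-verified Lean document; each statement's English description precedes it below -/
import Mathlib

section
/- Let p be an odd prime, q ∈ 1 + pℤ_p, and n ≥ 1. Then the map z mod p^n ↦ ι_q(z) mod p^n is a well-defined bijection of ℤ/p^nℤ; in particular ∑_{z=0}^{p^n−1} ι_q(z) ≡ 0 (mod p^n). -/
/-!
Write `[m]_q = ∑_{i<m} q^i`. Since `[m]_q (q - 1) = q^m - 1`, lifting the exponent gives
`v_p([m]_q) = v_p(m)`; as `[a]_q - [b]_q = q^b [a - b]_q` with `q` a unit,
`[a]_q ≡ [b]_q` iff `a ≡ b` modulo `p^n` for natural numbers. Closed balls in `ℤ_[p]` are open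
and `ℕ` is dense, so a continuous `ι` agrees modulo `p^n` with its value at a natural number
congruent to `z`; hence the equivalence holds on all of `ℤ_[p]` and `ι` induces an injective,
hence bijective, self-map of `ℤ/p^nℤ`. The sum is then that of all residues, which vanishes
for odd `p^n`.
-/

open Finset

namespace ZMod

theorem sum_range_natCast {N : ℕ} [NeZero N] {M : Type*} [AddCommMonoid M] (f : ZMod N → M) :
    ∑ z ∈ range N, f z = ∑ x, f x :=
  sum_nbij' (↑) val (by simp) (by simp [val_lt])
    (fun a ha => by simp [val_natCast_of_lt (mem_range.1 ha)]) (by simp) (by simp)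

theorem sum_univ_eq_zero_of_odd {N : ℕ} [NeZero N] (hN : Odd N) : ∑ x : ZMod N, x = 0 := by
  have hneg : ∑ x : ZMod N, x = -∑ x : ZMod N, x := by
    rw [← sum_neg_distrib]
    exact (Equiv.sum_comp (Equiv.neg (ZMod N)) id).symm
  have h2 : IsUnit (2 : ZMod N) := by
    exact_mod_cast (isUnit_iff_coprime 2 N).2 (Nat.coprime_two_left.2 hN)
  refine h2.mul_right_eq_zero.1 ?_
  rw [two_mul]
  nth_rw 2 [hneg]
  exact add_neg_cancel _

end ZMod

namespace PadicInt

variable {p : ℕ} [Fact p.Prime]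

theorem toZModPow_eq_zero_iff_dvd {n : ℕ} {x : ℤ_[p]} :
    toZModPow n x = 0 ↔ (p : ℤ_[p]) ^ n ∣ x := by
  rw [← RingHom.mem_ker, ker_toZModPow, Ideal.mem_span_singleton]

theorem toZModPow_eq_iff_dvd_sub {n : ℕ} {x y : ℤ_[p]} :
    toZModPow n x = toZModPow n y ↔ (p : ℤ_[p]) ^ n ∣ x - y := by
  rw [← sub_eq_zero, ← map_sub, toZModPow_eq_zero_iff_dvd]

theorem toZModPow_eq_iff_dist_le {n : ℕ} {x y : ℤ_[p]} :
    toZModPow n x = toZModPow n y ↔ dist x y ≤ (p : ℝ) ^ (-n : ℤ) := by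
  rw [dist_eq_norm, norm_le_pow_iff_mem_span_pow, Ideal.mem_span_singleton,
    toZModPow_eq_iff_dvd_sub]

theorem exists_natCast_toZModPow_eq {f : ℤ_[p] → ℤ_[p]} (hf : Continuous f) (n : ℕ) (z : ℤ_[p]) :
    ∃ k : ℕ, toZModPow n k = toZModPow n z ∧ toZModPow n (f k) = toZModPow n (f z) := by
  have hr : (p : ℝ) ^ (-n : ℤ) ≠ 0 :=
    zpow_ne_zero _ (Nat.cast_ne_zero.2 (Fact.out : p.Prime).ne_zero)
  have hU : IsOpen (Metric.closedBall z _ ∩ f ⁻¹' Metric.closedBall (f z) _) :=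
    (IsUltrametricDist.isOpen_closedBall z hr).inter
      ((IsUltrametricDist.isOpen_closedBall (f z) hr).preimage hf)
  obtain ⟨k, hkz, hfk⟩ := denseRange_natCast.exists_mem_open hU ⟨z, by simp, by simp⟩
  exact ⟨k, toZModPow_eq_iff_dist_le.2 hkz, toZModPow_eq_iff_dist_le.2 hfk⟩

theorem isUnit_of_dvd_sub_one {q : ℤ_[p]} (hq : (p : ℤ_[p]) ∣ q - 1) : IsUnit q := by
  by_contra h
  rw [not_isUnit_iff, norm_lt_one_iff_dvd] at h
  exact prime_p.not_dvd_one (by simpa using dvd_sub h hq)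

theorem natCast_dvd_natCast_iff {r : ℕ} : (p : ℤ_[p]) ∣ r ↔ p ∣ r := by
  have h := pow_p_dvd_int_iff (p := p) 1 r
  simp only [pow_one, Int.cast_natCast] at h
  exact_mod_cast h

theorem emultiplicity_geom_sum (hp : Odd p) {q : ℤ_[p]} (hq : (p : ℤ_[p]) ∣ q - 1) (m : ℕ) :
    emultiplicity (p : ℤ_[p]) (∑ i ∈ range m, q ^ i) = emultiplicity (p : ℤ_[p]) m := by
  rcases eq_or_ne q 1 with rfl | hq1
  · simp
  rcases eq_or_ne m 0 with rfl | hm0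
  · simp
  obtain ⟨k, r, hpr, rfl⟩ := Nat.exists_eq_pow_mul_and_not_dvd hm0 p (Fact.out : p.Prime).ne_one
  rw [← natCast_dvd_natCast_iff] at hpr
  have hpq : ¬(p : ℤ_[p]) ∣ q := fun h =>
    prime_p.not_isUnit (isUnit_of_dvd_unit h (isUnit_of_dvd_sub_one hq))
  have hlte : emultiplicity (p : ℤ_[p]) (q ^ (p ^ k * r) - 1) =
      emultiplicity (p : ℤ_[p]) (q - 1) + k := by
    have hsplit : q ^ (p ^ k * r) - 1 = (q ^ p ^ k) ^ r - 1 ^ r := by rw [pow_mul, one_pow]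
    have hdvd : (p : ℤ_[p]) ∣ q ^ p ^ k - 1 := hq.trans (sub_one_dvd_pow_sub_one q _)
    have hndvd : ¬(p : ℤ_[p]) ∣ q ^ p ^ k := fun h => hpq (prime_p.dvd_of_dvd_pow h)
    rw [hsplit, emultiplicity_pow_sub_pow_of_prime prime_p hdvd hndvd hpr]
    simpa only [one_pow] using
      emultiplicity_pow_prime_pow_sub_pow_prime_pow (y := 1) prime_p hp hq hpq k
  have hmk : emultiplicity (p : ℤ_[p]) ((p ^ k * r : ℕ) : ℤ_[p]) = k := by
    rw [Nat.cast_mul, Nat.cast_pow, emultiplicity_mul prime_p,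
      emultiplicity_pow_self_of_prime prime_p, emultiplicity_eq_zero.2 hpr, add_zero]
  have hfin : emultiplicity (p : ℤ_[p]) (q - 1) ≠ ⊤ :=
    finiteMultiplicity_iff_emultiplicity_ne_top.1
      (FiniteMultiplicity.of_prime_left prime_p (sub_ne_zero.2 hq1))
  have h := emultiplicity_mul (a := ∑ i ∈ range (p ^ k * r), q ^ i) (b := q - 1) prime_p
  rw [geom_sum_mul, hlte, ← hmk, add_comm] at h
  exact WithTop.add_right_cancel hfin h.symm

theorem toZModPow_geom_sum_eq_iff (hp : Odd p) {q : ℤ_[p]} (hq : (p : ℤ_[p]) ∣ q - 1)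
    (n a b : ℕ) :
    toZModPow n (∑ i ∈ range a, q ^ i) = toZModPow n (∑ i ∈ range b, q ^ i) ↔
      toZModPow n (a : ℤ_[p]) = toZModPow n b := by
  wlog hba : b ≤ a generalizing a b
  · exact eq_comm.trans ((this b a (le_of_not_ge hba)).trans eq_comm)
  obtain ⟨c, rfl⟩ := Nat.exists_eq_add_of_le hba
  rw [toZModPow_eq_iff_dvd_sub, toZModPow_eq_iff_dvd_sub, sum_range_add, add_sub_cancel_left,
    Nat.cast_add, add_sub_cancel_left]
  simp_rw [pow_add, ← mul_sum]
  rw [((isUnit_of_dvd_sub_one hq).pow b).dvd_mul_left, pow_dvd_iff_le_emultiplicity,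
    pow_dvd_iff_le_emultiplicity, emultiplicity_geom_sum hp hq]

theorem exists_bijective_of_toZModPow_eq_iff {n : ℕ} {g : ℤ_[p] → ℤ_[p]}
    (hg : ∀ x y, toZModPow n (g x) = toZModPow n (g y) ↔ toZModPow n x = toZModPow n y) :
    ∃ f : ZMod (p ^ n) → ZMod (p ^ n),
      Function.Bijective f ∧ ∀ z, f (toZModPow n z) = toZModPow n (g z) := by
  have : NeZero (p ^ n) := ⟨pow_ne_zero _ (Fact.out : p.Prime).ne_zero⟩
  have hcast (x : ZMod (p ^ n)) : toZModPow n (x.val : ℤ_[p]) = x := by simp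
  refine ⟨fun x => toZModPow n (g (x.val : ℤ_[p])), Finite.injective_iff_bijective.1 ?_,
    fun z => (hg _ z).2 (hcast _)⟩
  intro x y h
  simpa [hcast] using (hg _ _).1 h

end PadicInt

open PadicInt in
theorem iota_mod_bijective_general (p : ℕ) [Fact p.Prime] (hp : Odd p)
    (q : ℤ_[p]) (hq : (p : ℤ_[p]) ∣ q - 1)
    (ι : ℤ_[p] → ℤ_[p]) (hcont : Continuous ι)
    (hval : ∀ n : ℕ, ι n = ∑ i ∈ Finset.range n, q ^ i)
    (n : ℕ) :
    (∃ f : ZMod (p ^ n) → ZMod (p ^ n),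
        Function.Bijective f ∧
        ∀ z : ℤ_[p], f (PadicInt.toZModPow n z) = PadicInt.toZModPow n (ι z)) ∧
    (p : ℤ_[p]) ^ n ∣ ∑ z ∈ Finset.range (p ^ n), ι (z : ℤ_[p]) := by
  have hι (x y : ℤ_[p]) :
      toZModPow n (ι x) = toZModPow n (ι y) ↔ toZModPow n x = toZModPow n y := by
    obtain ⟨k, hkx, hιk⟩ := exists_natCast_toZModPow_eq hcont n x
    obtain ⟨l, hly, hιl⟩ := exists_natCast_toZModPow_eq hcont n y
    rw [← hkx, ← hly, ← hιk, ← hιl, hval, hval, toZModPow_geom_sum_eq_iff hp hq]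
  obtain ⟨f, hf, hfι⟩ := exists_bijective_of_toZModPow_eq_iff hι
  refine ⟨⟨f, hf, hfι⟩, toZModPow_eq_zero_iff_dvd.1 ?_⟩
  have : NeZero (p ^ n) := ⟨pow_ne_zero _ (Fact.out : p.Prime).ne_zero⟩
  calc toZModPow n (∑ z ∈ range (p ^ n), ι z) = ∑ z ∈ range (p ^ n), f z := by
        simp [← hfι]
    _ = ∑ x, f x := ZMod.sum_range_natCast f
    _ = ∑ x, x := hf.sum_comp id
    _ = 0 := ZMod.sum_univ_eq_zero_of_odd hp.pow

/-- For `p` odd, `q ∈ 1 + pℤ_p`, `n ≥ 1`: the map induced by `ι_q` on `ℤ/p^nℤ`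
is a well-defined bijection; in particular `∑_{z=0}^{p^n−1} ι_q(z) ≡ 0 (mod p^n)`. -/
theorem iota_mod_bijective (p : ℕ) [Fact p.Prime] (hp : Odd p)
    (q : ℤ_[p]) (hq : (p : ℤ_[p]) ∣ q - 1)
    (ι : ℤ_[p] → ℤ_[p]) (hcont : Continuous ι)
    (hval : ∀ n : ℕ, ι n = ∑ i ∈ Finset.range n, q ^ i)
    (n : ℕ) (hn : 1 ≤ n) :
    (∃ f : ZMod (p ^ n) → ZMod (p ^ n),
        Function.Bijective f ∧
        ∀ z : ℤ_[p], f (PadicInt.toZModPow n z) = PadicInt.toZModPow n (ι z)) ∧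
    (p : ℤ_[p]) ^ n ∣ ∑ z ∈ Finset.range (p ^ n), ι (z : ℤ_[p]) :=
  iota_mod_bijective_general p hp q hq ι hcont hval n
end

section
/- Let q ∈ 1 + 4ℤ_2 and n ≥ 1. Then ∑_{z=0}^{2^n − 1} ι_q(z) ≡ 2^{n−1} (mod 2^n). -/
/-!
Write `S(N) = ∑_{z<N} ι_q(z)`. Since `ι_q(m + z) = ι_q(m) + q^m ι_q(z)`, doubling the range
gives `S(2m) = (1 + q^m) S(m) + m ι_q(m)`. For `m = 2^n` the correction terms are harmless
modulo `2^(n+1)`: `q^(2^n) ≡ 1 (mod 2^(n+2))` because `q ≡ 1 (mod 4)`, and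
`ι_q(2^n) ≡ 2^n ≡ 0 (mod 2)`. Hence
`S(2^(n+1)) - 2^n ≡ 2 (S(2^n) - 2^(n-1)) (mod 2^(n+1))`, and induction on `n` concludes.
-/

open Finset

section Semiring

variable {R : Type*} [CommSemiring R]

theorem geom_sum_range_add (x : R) (m n : ℕ) :
    ∑ i ∈ range (m + n), x ^ i =
      ∑ i ∈ range m, x ^ i + x ^ m * ∑ i ∈ range n, x ^ i := by
  simp only [sum_range_add, mul_sum, pow_add]

theorem sum_geom_sum_range_two_mul (x : R) (m : ℕ) :
    ∑ z ∈ range (2 * m), ∑ i ∈ range z, x ^ i =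
      (1 + x ^ m) * ∑ z ∈ range m, ∑ i ∈ range z, x ^ i + m * ∑ i ∈ range m, x ^ i := by
  rw [two_mul, sum_range_add]
  simp only [geom_sum_range_add, sum_add_distrib, sum_const, card_range, nsmul_eq_mul, ← mul_sum]
  ring

end Semiring

section Ring

variable {R : Type*} [CommRing R]

theorem sub_one_dvd_geom_sum_sub (x : R) (n : ℕ) : x - 1 ∣ ∑ i ∈ range n, x ^ i - n := by
  have hsum : ∑ i ∈ range n, x ^ i - n = ∑ i ∈ range n, (x ^ i - 1) := by
    simp [sum_sub_distrib]
  rw [hsum]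
  exact dvd_sum fun i _ => sub_one_dvd_pow_sub_one x i

theorem two_pow_add_two_dvd_pow_two_pow_sub_one {x : R} (hx : 4 ∣ x - 1) (n : ℕ) :
    (2 : R) ^ (n + 2) ∣ x ^ 2 ^ n - 1 := by
  induction n with
  | zero => simpa [show (2 : R) ^ 2 = 4 by norm_num] using hx
  | succ n ih =>
    obtain ⟨c, hc⟩ := ih
    have hfactor : x ^ 2 ^ (n + 1) - 1 = (x ^ 2 ^ n - 1) * (x ^ 2 ^ n + 1) := by
      rw [pow_succ, pow_mul]
      ring
    rw [hfactor, pow_succ]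
    exact mul_dvd_mul ⟨c, hc⟩ ⟨2 ^ (n + 1) * c + 1, by linear_combination hc⟩

theorem two_pow_succ_dvd_sum_geom_sum_sub {x : R} (hx : 4 ∣ x - 1) (n : ℕ) :
    (2 : R) ^ (n + 1) ∣ ∑ z ∈ range (2 ^ (n + 1)), ∑ i ∈ range z, x ^ i - 2 ^ n := by
  induction n with
  | zero => simp [sum_range_succ]
  | succ n ih =>
    set S := ∑ z ∈ range (2 ^ (n + 1)), ∑ i ∈ range z, x ^ i
    set T := ∑ i ∈ range (2 ^ (n + 1)), x ^ i
    have hT : (2 : R) ∣ T := by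
      have h2 : (2 : R) ∣ x - 1 := (Dvd.intro 2 (by norm_num) : (2 : R) ∣ 4).trans hx
      simpa using
        (h2.trans (sub_one_dvd_geom_sum_sub x (2 ^ (n + 1)))).add (dvd_pow_self 2 n.succ_ne_zero)
    have hdouble : ∑ z ∈ range (2 ^ (n + 2)), ∑ i ∈ range z, x ^ i - 2 ^ (n + 1) =
        2 * (S - 2 ^ n) + (x ^ 2 ^ (n + 1) - 1) * S + 2 ^ (n + 1) * T := by
      rw [pow_succ' 2 (n + 1), sum_geom_sum_range_two_mul]
      push_cast
      ring
    rw [hdouble]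
    refine dvd_add (dvd_add ?_ ?_) ?_
    · rw [pow_succ']
      exact mul_dvd_mul_left 2 ih
    · exact dvd_mul_of_dvd_left
        ((pow_dvd_pow 2 (by omega)).trans (two_pow_add_two_dvd_pow_two_pow_sub_one hx (n + 1))) S
    · rw [pow_succ]
      exact mul_dvd_mul_left _ hT

end Ring

/-- For `q ∈ 1 + 4ℤ_2` and `n ≥ 1`: `∑_{z=0}^{2^n−1} ι_q(z) ≡ 2^{n−1} (mod 2^n)`,
where `ι_q(z) = 1 + q + ⋯ + q^{z−1}`. -/
theorem iota_sum_mod_one (q : ℤ_[2]) (hq : (4 : ℤ_[2]) ∣ q - 1) (n : ℕ) (hn : 1 ≤ n) :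
    (2 : ℤ_[2]) ^ n ∣
      (∑ z ∈ Finset.range (2 ^ n), ∑ i ∈ Finset.range z, q ^ i) - 2 ^ (n - 1) := by
  obtain ⟨k, rfl⟩ := Nat.exists_eq_add_of_le' hn
  exact two_pow_succ_dvd_sum_geom_sum_sub hq k
end

section
/- Let n ≥ 3 and q ∈ ℤ_3 with q ≡ 4 (mod 9). Then for every c ∈ ℤ_3, ι_q(1 + c·3^{n−2}) ≡ 1 + c·3^{n−2} (mod 3^n). -/
/-!
Write `N = 3^k` with `k = n - 2 ≥ 1`. For a natural number `1 + mN`, the geometric sum factors as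
`ι(1 + mN) = 1 + q·ι(N)·(1 + q^N + ⋯ + q^{(m-1)N})`. Since `q ≡ 1 (mod 3)`, `q^N ≡ 1 (mod 3^{k+1})`,
so the last factor is `≡ m (mod 3^{k+1})`; and the condition `q ≡ 4 (mod 9)` is exactly what makes
`q·ι(N) ≡ N (mod 3^{k+2})`, by induction on `k` from `q(1 + q + q²) ≡ 3 (mod 27)`. Hence
`ι(1 + mN) ≡ 1 + mN (mod 3^{k+2})` for all `m ∈ ℕ`, and this passes to all of `ℤ_3` because `ℕ` is
dense and ideals of `ℤ_3` are closed.
-/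

open Finset

section GeomSum

variable {R : Type*} [CommRing R]

theorem geom_sum_range_mul (x : R) (a b : ℕ) :
    ∑ i ∈ range (a * b), x ^ i = (∑ i ∈ range a, x ^ i) * ∑ j ∈ range b, (x ^ a) ^ j := by
  induction b with
  | zero => simp
  | succ b ih =>
    rw [Nat.mul_succ, sum_range_add, ih, sum_range_succ, mul_add, ← pow_mul]
    simp only [pow_add, ← mul_sum]
    ring

theorem dvd_geom_sum_sub_of_dvd_sub_one {d r : R} (h : d ∣ r - 1) (m : ℕ) :
    d ∣ ∑ i ∈ range m, r ^ i - m := by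
  have : ∑ i ∈ range m, r ^ i - m = ∑ i ∈ range m, (r ^ i - 1) := by simp
  rw [this]
  exact dvd_sum fun i _ => h.trans (sub_one_dvd_pow_sub_one r i)

theorem three_mul_dvd_geom_sum_three_sub {d r : R} (h3 : 3 ∣ d) (h : d ∣ r - 1) :
    3 * d ∣ ∑ i ∈ range 3, r ^ i - 3 := by
  have : ∑ i ∈ range 3, r ^ i - 3 = (r - 1) * (r - 1 + 3) := by
    simp only [sum_range_succ, sum_range_zero]
    ring
  rw [this, mul_comm 3 d]
  exact mul_dvd_mul h (dvd_add (h3.trans h) dvd_rfl)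

theorem three_pow_succ_dvd_pow_three_pow_sub_one {q : R} (hq : 3 ∣ q - 1) (k : ℕ) :
    3 ^ (k + 1) ∣ q ^ 3 ^ k - 1 := by
  have h := dvd_sub_pow_of_dvd_sub (p := 3) (b := (1 : R)) (by exact_mod_cast hq) k
  rw [one_pow] at h
  exact_mod_cast h

end GeomSum

section FourModNine

variable {R : Type*} [CommRing R] {q : R}

theorem three_dvd_sub_one_of_nine_dvd_sub_four (hq : 9 ∣ q - 4) : 3 ∣ q - 1 := by
  have : q - 1 = (q - 4) + 3 := by ring
  rw [this]
  exact dvd_add ((Dvd.intro_left 3 (by norm_num)).trans hq) dvd_rfl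

theorem three_pow_add_two_dvd_mul_geom_sum_sub (hq : 9 ∣ q - 4) {k : ℕ} (hk : 1 ≤ k) :
    3 ^ (k + 2) ∣ q * ∑ i ∈ range (3 ^ k), q ^ i - 3 ^ k := by
  induction k, hk using Nat.le_induction with
  | base =>
    obtain ⟨t, rfl⟩ : ∃ t, q = 4 + 9 * t := by
      obtain ⟨t, ht⟩ := hq
      exact ⟨t, by linear_combination ht⟩
    refine ⟨3 + 19 * t + 39 * t ^ 2 + 27 * t ^ 3, ?_⟩
    simp only [pow_one, sum_range_succ, sum_range_zero]
    ring
  | succ k hk ih =>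
    set T := ∑ i ∈ range 3, (q ^ 3 ^ k) ^ i
    have hT : 3 * 3 ^ (k + 1) ∣ T - 3 :=
      three_mul_dvd_geom_sum_three_sub (dvd_pow_self 3 k.succ_ne_zero)
        (three_pow_succ_dvd_pow_three_pow_sub_one (three_dvd_sub_one_of_nine_dvd_sub_four hq) k)
    have hsplit : q * ∑ i ∈ range (3 ^ (k + 1)), q ^ i - 3 ^ (k + 1)
        = (q * ∑ i ∈ range (3 ^ k), q ^ i - 3 ^ k) * T + 3 ^ k * (T - 3) := by
      rw [pow_succ 3 k, geom_sum_range_mul]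
      ring
    rw [hsplit]
    refine dvd_add ?_ ?_
    · have h3T : (3 : R) ∣ T := dvd_sub_self_right.mp ((dvd_mul_right 3 _).trans hT)
      rw [show k + 1 + 2 = k + 2 + 1 by omega, pow_succ]
      exact mul_dvd_mul ih h3T
    · refine (pow_dvd_pow 3 (by omega : k + 1 + 2 ≤ k + (k + 2))).trans ?_
      rw [pow_add, pow_succ']
      exact mul_dvd_mul_left _ hT

theorem three_pow_add_two_dvd_geom_sum_sub (hq : 9 ∣ q - 4) {k : ℕ} (hk : 1 ≤ k) (m : ℕ) :
    3 ^ (k + 2) ∣ ∑ i ∈ range (3 ^ k * m + 1), q ^ i - (1 + m * 3 ^ k) := by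
  set T := ∑ j ∈ range m, (q ^ 3 ^ k) ^ j
  have hT : 3 ^ (k + 1) ∣ T - m := dvd_geom_sum_sub_of_dvd_sub_one
    (three_pow_succ_dvd_pow_three_pow_sub_one (three_dvd_sub_one_of_nine_dvd_sub_four hq) k) m
  have hsplit : ∑ i ∈ range (3 ^ k * m + 1), q ^ i - (1 + m * 3 ^ k)
      = (q * ∑ i ∈ range (3 ^ k), q ^ i - 3 ^ k) * T + 3 ^ k * (T - m) := by
    rw [geom_sum_succ, geom_sum_range_mul]
    ring
  rw [hsplit]
  refine dvd_add (dvd_mul_of_dvd_left (three_pow_add_two_dvd_mul_geom_sum_sub hq hk) T) ?_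
  refine (pow_dvd_pow 3 (by omega : k + 2 ≤ k + (k + 1))).trans ?_
  rw [pow_add]
  exact mul_dvd_mul_left _ hT

end FourModNine

theorem dvd_of_forall_natCast_dvd {R : Type*} [CommRing R] [TopologicalSpace R]
    [IsTopologicalRing R] [IsNoetherianRing R] [CompactSpace R] [T2Space R]
    (hdense : DenseRange (Nat.cast : ℕ → R)) {f : R → R} (hf : Continuous f) (d : R)
    (h : ∀ m : ℕ, d ∣ f m) (x : R) : d ∣ f x := by
  have hclosed : IsClosed {y : R | d ∣ f y} := by
    have : {y : R | d ∣ f y} = f ⁻¹' (Ideal.span {d} : Set R) := by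
      ext y
      simp [Ideal.mem_span_singleton]
    rw [this]
    exact (IsNoetherianRing.isClosed_ideal _).preimage hf
  exact hdense.induction_on x hclosed h

/-- For `n ≥ 3` and `q ≡ 4 (mod 9)` in `ℤ_3`:
`ι_q(1 + c·3^{n−2}) ≡ 1 + c·3^{n−2} (mod 3^n)` for every `c ∈ ℤ_3`. -/
theorem fixed_points_four (n : ℕ) (hn : 3 ≤ n)
    (q : ℤ_[3]) (hq : (9 : ℤ_[3]) ∣ q - 4)
    (ι : ℤ_[3] → ℤ_[3]) (hcont : Continuous ι)
    (hval : ∀ k : ℕ, ι k = ∑ i ∈ Finset.range k, q ^ i)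
    (c : ℤ_[3]) :
    (3 : ℤ_[3]) ^ n ∣ ι (1 + c * 3 ^ (n - 2)) - (1 + c * 3 ^ (n - 2)) := by
  obtain ⟨k, rfl⟩ : ∃ k, n = k + 2 := ⟨n - 2, by omega⟩
  rw [Nat.add_sub_cancel]
  refine dvd_of_forall_natCast_dvd (f := fun x => ι (1 + x * 3 ^ k) - (1 + x * 3 ^ k))
    PadicInt.denseRange_natCast (by fun_prop) _ (fun m => ?_) c
  have hcast : 1 + (m : ℤ_[3]) * 3 ^ k = ((3 ^ k * m + 1 : ℕ) : ℤ_[3]) := by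
    push_cast
    ring
  rw [hcast, hval, ← hcast]
  exact three_pow_add_two_dvd_geom_sum_sub hq (by omega) m
end

section
/- Let n ≥ 3, q ∈ 1 + 3ℤ_3 with q ≢ 1 (mod 9), and let a_0 ∈ 3ℤ_3, a_0 ≠ 0, with v = v_3(a_0). Suppose ι_q(a_0) ≡ a_0 (mod 3^n). Then for c ∈ ℤ_3, ι_q(c·a_0) ≡ c·a_0 (mod 3^n) if and only if c(c−1) ∈ 3^{n−2v−1}ℤ_3. -/
/-!
Write `q ^ x := 1 + (q - 1) ι(x)` for the continuous extension of `k ↦ q ^ k`, so that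
`q ^ (k x) = (q ^ x) ^ k`, and put `T := q ^ a₀ - 1 = (q - 1) ι(a₀)`. For natural `k`,
`(q - 1)(ι(k a₀) - k a₀) = ((1 + T) ^ k - 1 - k T) + k (q - 1)(ι(a₀) - a₀)`, where the last term
vanishes mod `3 ^ (n + 1)`. Since `‖T‖ ≤ 3⁻²`, the term `C(k, 2) T²` dominates the binomial expansion
of `(1 + T) ^ k - 1 - k T`, so the condition becomes `‖k (k - 1)‖ ‖ι(a₀)‖² ≤ 3 ^ (1 - n)`; here
`‖ι(a₀)‖ = ‖a₀‖ = 3 ^ (-v)` unless `n ≤ v`, when both sides of the claim hold. Both sides are clopen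
conditions on `c`, so the equivalence passes from `ℕ` to its closure `ℤ_[3]`.
-/

open Finset PadicInt

theorem IsUltrametricDist.norm_add_eq_left_of_norm_le_mul {E : Type*} [SeminormedAddGroup E]
    [IsUltrametricDist E] {x y : E} {r : ℝ} (hr : r < 1) (h : ‖y‖ ≤ r * ‖x‖) :
    ‖x + y‖ = ‖x‖ := by
  rcases (norm_nonneg x).eq_or_lt with hx | hx
  · have hy : ‖y‖ = 0 := le_antisymm (by simpa [← hx] using h) (norm_nonneg y)
    exact le_antisymm ((norm_add_le x y).trans (by rw [← hx, hy]; simp)) (by rw [← hx]; positivity)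
  · have hyx : ‖y‖ < ‖x‖ := h.trans_lt (by nlinarith)
    rw [norm_add_eq_max_of_norm_ne_norm hyx.ne', max_eq_left hyx.le]

theorem IsUltrametricDist.norm_le_iff_of_norm_sub_le {E : Type*} [SeminormedAddCommGroup E]
    [IsUltrametricDist E] {x y : E} {r : ℝ} (h : ‖x - y‖ ≤ r) : ‖x‖ ≤ r ↔ ‖y‖ ≤ r := by
  constructor <;> intro hle
  · simpa using (norm_add_le_max x (-(x - y))).trans (max_le hle (by rwa [norm_neg]))
  · simpa using (norm_add_le_max (x - y) y).trans (max_le h hle)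

theorem Nat.choose_two_le_three_pow (i : ℕ) : (i + 3).choose 2 ≤ 3 ^ (2 * i + 1) := by
  induction i with
  | zero => decide
  | succ i ih =>
    have hle : i + 3 ≤ (i + 3).choose 2 := by
      rw [Nat.choose_two_right, show i + 3 - 1 = i + 2 by omega]
      exact (Nat.le_div_iff_mul_le two_pos).2 (by nlinarith)
    have hsucc : (i + 1 + 3).choose 2 = (i + 3) + (i + 3).choose 2 := by
      rw [show i + 1 + 3 = i + 3 + 1 by ring, Nat.choose_succ_succ', Nat.choose_one_right]
    rw [hsucc, show 2 * (i + 1) + 1 = 2 * i + 1 + 2 by ring, pow_add]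
    omega

namespace PadicInt

variable {p : ℕ} [hp : Fact p.Prime]

theorem pow_dvd_iff_norm_le {x : ℤ_[p]} {n : ℕ} :
    (p : ℤ_[p]) ^ n ∣ x ↔ ‖x‖ ≤ (p : ℝ) ^ (-n : ℤ) := by
  rw [norm_le_pow_iff_mem_span_pow, Ideal.mem_span_singleton]

theorem pow_toNat_dvd_iff_norm_le {x : ℤ_[p]} (m : ℤ) :
    (p : ℤ_[p]) ^ m.toNat ∣ x ↔ ‖x‖ ≤ (p : ℝ) ^ (-m) := by
  rcases le_or_gt m 0 with hm | hm
  · rw [Int.toNat_of_nonpos hm, pow_zero]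
    simp only [one_dvd, true_iff]
    exact (norm_le_one x).trans (one_le_zpow₀ (by exact_mod_cast hp.out.one_lt.le) (by omega))
  · rw [pow_dvd_iff_norm_le, Int.toNat_of_nonneg hm.le]

theorem norm_eq_of_pow_dvd_of_not_pow_dvd {x : ℤ_[p]} {n : ℕ} (h : (p : ℤ_[p]) ^ n ∣ x)
    (h' : ¬ (p : ℤ_[p]) ^ (n + 1) ∣ x) : ‖x‖ = (p : ℝ) ^ (-n : ℤ) := by
  rw [pow_dvd_iff_norm_le] at h h'
  refine le_antisymm h (not_lt.1 fun hlt => h' ?_)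
  rw [norm_lt_pow_iff_norm_le_pow_sub_one] at hlt
  convert hlt using 2
  push_cast; ring

theorem inv_natCast_le_norm {m : ℕ} (hm : m ≠ 0) : (m : ℝ)⁻¹ ≤ ‖(m : ℤ_[p])‖ := by
  have hval : ((m : ℤ_[p]).valuation : ℤ) = padicValNat p m := by
    rw [← valuation_coe]; simp
  rw [norm_eq_zpow_neg_valuation (Nat.cast_ne_zero.2 hm), hval, zpow_neg, zpow_natCast]
  gcongr
  · exact pow_pos (by exact_mod_cast hp.out.pos) _
  · exact_mod_cast Nat.le_of_dvd (Nat.pos_of_ne_zero hm) pow_padicValNat_dvd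

theorem norm_natCast_choose_two (hp2 : p ≠ 2) (k : ℕ) :
    ‖(k.choose 2 : ℤ_[p])‖ = ‖(k : ℤ_[p]) * (k - 1)‖ := by
  have h2 : ‖((2 : ℕ) : ℤ_[p])‖ = 1 :=
    norm_natCast_eq_one_iff.2 ((Nat.coprime_primes hp.out Nat.prime_two).2 hp2)
  rw [← Nat.cast_descFactorial_two, Nat.descFactorial_eq_factorial_mul_choose, Nat.factorial_two,
    Nat.cast_mul, norm_mul, h2, one_mul]

theorem norm_one_add_pow_sub_sub (hp2 : p ≠ 2) {T : ℤ_[p]} (hT : (p : ℤ_[p]) ^ 2 ∣ T) (k : ℕ) :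
    ‖(1 + T) ^ k - 1 - k * T‖ = ‖(k : ℤ_[p]) * (k - 1)‖ * ‖T‖ ^ 2 := by
  have expand : (1 + T) ^ k - 1 - k * T =
      k.choose 2 * T ^ 2 + ∑ i ∈ range k, (k.choose (i + 3) : ℤ_[p]) * T ^ (i + 3) := by
    have h : (1 + T) ^ k = ∑ m ∈ range (k + 3), (k.choose m : ℤ_[p]) * T ^ m := by
      rw [add_comm, add_pow, sum_range_succ _ (k + 2), sum_range_succ _ (k + 1),
        Nat.choose_succ_self, Nat.choose_eq_zero_of_lt (by omega : k < k + 2)]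
      simp [mul_comm]
    rw [h, sum_range_succ', sum_range_succ', sum_range_succ']
    simp only [zero_add, Nat.reduceAdd, Nat.choose_one_right, pow_one, Nat.choose_zero_right,
      Nat.cast_one, pow_zero, mul_one, add_sub_cancel_right]
    ring
  have hp3 : 3 ≤ p := lt_of_le_of_ne hp.out.two_le (Ne.symm hp2)
  have hp0 : (0 : ℝ) < p := by exact_mod_cast hp.out.pos
  have hTnorm : ‖T‖ ≤ ((p : ℝ) ^ 2)⁻¹ := by
    simpa [zpow_neg] using pow_dvd_iff_norm_le.1 hT
  -- `C(k, i) C(i, 2) = C(k, 2) C(k - 2, i - 2)` bounds the tail terms by the quadratic one.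
  have tail (i : ℕ) : ‖(k.choose (i + 3) : ℤ_[p]) * T ^ (i + 3)‖ ≤
      (p : ℝ)⁻¹ * ‖(k.choose 2 : ℤ_[p]) * T ^ 2‖ := by
    have hchoose : ‖(k.choose (i + 3) : ℤ_[p])‖ * ‖((i + 3).choose 2 : ℤ_[p])‖ ≤
        ‖(k.choose 2 : ℤ_[p])‖ := by
      rw [← norm_mul, ← Nat.cast_mul, Nat.choose_mul (by omega), Nat.cast_mul, norm_mul]
      exact mul_le_of_le_one_right (norm_nonneg _) (norm_le_one _)
    have hlow : ((p : ℝ) ^ (2 * i + 1))⁻¹ ≤ ‖((i + 3).choose 2 : ℤ_[p])‖ := by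
      refine le_trans ?_ (inv_natCast_le_norm (Nat.choose_pos (by omega)).ne')
      gcongr
      · exact_mod_cast Nat.choose_pos (by omega)
      · exact_mod_cast (Nat.choose_two_le_three_pow i).trans (Nat.pow_le_pow_left hp3 _)
    have hpow : ((p : ℝ) ^ 2)⁻¹ ^ (i + 1) = (p : ℝ)⁻¹ * ((p : ℝ) ^ (2 * i + 1))⁻¹ := by
      rw [← inv_pow, ← inv_pow]; ring
    rw [norm_mul, norm_mul, norm_pow, norm_pow]
    calc ‖(k.choose (i + 3) : ℤ_[p])‖ * ‖T‖ ^ (i + 3)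
        = ‖(k.choose (i + 3) : ℤ_[p])‖ * ‖T‖ ^ (i + 1) * ‖T‖ ^ 2 := by ring
      _ ≤ ‖(k.choose (i + 3) : ℤ_[p])‖ * ((p : ℝ) ^ 2)⁻¹ ^ (i + 1) * ‖T‖ ^ 2 := by gcongr
      _ = (p : ℝ)⁻¹ * (‖(k.choose (i + 3) : ℤ_[p])‖ * ((p : ℝ) ^ (2 * i + 1))⁻¹) * ‖T‖ ^ 2 := by
        rw [hpow]; ring
      _ ≤ (p : ℝ)⁻¹ * ‖(k.choose 2 : ℤ_[p])‖ * ‖T‖ ^ 2 := by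
        gcongr
        exact (mul_le_mul_of_nonneg_left hlow (norm_nonneg _)).trans hchoose
      _ = _ := by ring
  rw [expand, IsUltrametricDist.norm_add_eq_left_of_norm_le_mul (inv_lt_one_of_one_lt₀
      (by exact_mod_cast hp.out.one_lt))
    (IsUltrametricDist.norm_sum_le_of_forall_le_of_nonneg (by positivity) fun i _ => tail i),
    norm_mul, norm_pow, norm_natCast_choose_two hp2]

theorem isClopen_setOf_pow_dvd (n : ℕ) : IsClopen {x : ℤ_[p] | (p : ℤ_[p]) ^ n ∣ x} := by
  have : {x : ℤ_[p] | (p : ℤ_[p]) ^ n ∣ x} = Metric.closedBall 0 ((p : ℝ) ^ (-n : ℤ)) := by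
    ext x; simp [pow_dvd_iff_norm_le]
  rw [this]
  exact IsUltrametricDist.isClopen_closedBall 0 (zpow_pos (by exact_mod_cast hp.out.pos) _).ne'

theorem isClosed_setOf_pow_dvd_iff_pow_dvd {X : Type*} [TopologicalSpace X] {f g : X → ℤ_[p]}
    (hf : Continuous f) (hg : Continuous g) (m n : ℕ) :
    IsClosed {x | (p : ℤ_[p]) ^ m ∣ f x ↔ (p : ℤ_[p]) ^ n ∣ g x} := by
  have hA := (isClopen_setOf_pow_dvd m).preimage hf
  have hB := (isClopen_setOf_pow_dvd n).preimage hg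
  convert ((hA.inter hB).union (hA.compl.inter hB.compl)).isClosed using 1
  ext x
  simp only [Set.mem_ofPred_eq, Set.mem_union, Set.mem_inter_iff, Set.mem_compl_iff,
    Set.mem_preimage]
  tauto

/-- `1 + (q - 1) ι x` is the continuous extension of `q ^ x`: this is `q ^ (k x) = (q ^ x) ^ k`. -/
theorem one_add_sub_one_mul_apply_natCast_mul {q : ℤ_[p]} {ι : ℤ_[p] → ℤ_[p]}
    (hcont : Continuous ι) (hval : ∀ k : ℕ, ι k = ∑ i ∈ range k, q ^ i) (k : ℕ) (x : ℤ_[p]) :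
    1 + (q - 1) * ι ((k : ℤ_[p]) * x) = (1 + (q - 1) * ι x) ^ k := by
  have hpow (m : ℕ) : 1 + (q - 1) * ι m = q ^ m := by rw [hval, mul_comm, geom_sum_mul]; ring
  refine congrFun (denseRange_natCast.equalizer (g := fun x => 1 + (q - 1) * ι ((k : ℤ_[p]) * x))
    (h := fun x => (1 + (q - 1) * ι x) ^ k) (by fun_prop) (by fun_prop) (funext fun m => ?_)) x
  simp only [Function.comp_apply]
  rw [← Nat.cast_mul, hpow, hpow, ← pow_mul, mul_comm]

theorem pow_dvd_apply_natCast_mul_sub_iff (hp2 : p ≠ 2) {q : ℤ_[p]} (hq : ‖q - 1‖ = (p : ℝ)⁻¹)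
    {ι : ℤ_[p] → ℤ_[p]} (hcont : Continuous ι) (hval : ∀ k : ℕ, ι k = ∑ i ∈ range k, q ^ i)
    {x : ℤ_[p]} (hx : (p : ℤ_[p]) ∣ ι x) {n : ℕ} (hfix : (p : ℤ_[p]) ^ n ∣ ι x - x) (k : ℕ) :
    (p : ℤ_[p]) ^ n ∣ ι (k * x) - k * x ↔
      ‖(k : ℤ_[p]) * (k - 1)‖ * ‖ι x‖ ^ 2 ≤ (p : ℝ) ^ (1 - n : ℤ) := by
  have hp0 : (0 : ℝ) < p := by exact_mod_cast hp.out.pos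
  set T := (q - 1) * ι x with hT_def
  have hq1 : (p : ℤ_[p]) ∣ q - 1 := by
    simpa using (pow_dvd_iff_norm_le (n := 1)).2 (by simp [hq])
  have hT : (p : ℤ_[p]) ^ 2 ∣ T := pow_two (p : ℤ_[p]) ▸ mul_dvd_mul hq1 hx
  have hsplit : (q - 1) * (ι (k * x) - k * x) =
      ((1 + T) ^ k - 1 - k * T) + k * (q - 1) * (ι x - x) := by
    linear_combination (one_add_sub_one_mul_apply_natCast_mul hcont hval k x)
  have hsmall : ‖(k : ℤ_[p]) * (q - 1) * (ι x - x)‖ ≤ (p : ℝ)⁻¹ * p ^ (-n : ℤ) := by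
    rw [norm_mul, norm_mul, hq, mul_assoc]
    exact (mul_le_of_le_one_left (by positivity) (norm_le_one _)).trans
      (by gcongr; exact pow_dvd_iff_norm_le.1 hfix)
  have hexp : (p : ℝ) ^ (1 - n : ℤ) = p * p ^ (-n : ℤ) := by
    rw [sub_eq_add_neg, zpow_add₀ hp0.ne', zpow_one]
  have hmul (y : ℤ_[p]) : ‖(q - 1) * y‖ = (p : ℝ)⁻¹ * ‖y‖ := by rw [norm_mul, hq]
  rw [pow_dvd_iff_norm_le, ← mul_le_mul_iff_right₀ (inv_pos.2 hp0), ← hmul, hsplit,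
    IsUltrametricDist.norm_le_iff_of_norm_sub_le (by rwa [add_sub_cancel_left]),
    norm_one_add_pow_sub_sub hp2 hT, hT_def, hmul, hexp,
    show ∀ a b : ℝ, a * ((p : ℝ)⁻¹ * b) ^ 2 = (p : ℝ)⁻¹ * ((p : ℝ)⁻¹ * (a * b ^ 2)) by
      intros; ring,
    mul_le_mul_iff_right₀ (inv_pos.2 hp0), inv_mul_le_iff₀ hp0]

theorem norm_mul_sq_le_iff_pow_dvd {x z y : ℤ_[p]} {n v : ℕ} (hx : ‖x‖ = (p : ℝ) ^ (-v : ℤ))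
    (hz : ‖z - x‖ ≤ (p : ℝ) ^ (-n : ℤ)) :
    ‖y‖ * ‖z‖ ^ 2 ≤ (p : ℝ) ^ (1 - n : ℤ) ↔ (p : ℤ_[p]) ^ (n - 2 * v - 1) ∣ y := by
  have hp1 : (1 : ℝ) < p := by exact_mod_cast hp.out.one_lt
  have hp0 : (0 : ℝ) < p := by linarith
  rcases lt_or_ge v n with hvn | hnv
  · have hzx : ‖z‖ = ‖x‖ := by
      have h := IsUltrametricDist.norm_add_eq_left_of_norm_le_mul (inv_lt_one_of_one_lt₀ hp1)
        (x := x) (y := z - x) ?_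
      · simpa using h
      rw [hx, ← zpow_neg_one, ← zpow_add₀ hp0.ne']
      exact hz.trans (zpow_le_zpow_right₀ hp1.le (by omega))
    rw [show n - 2 * v - 1 = ((n : ℤ) - 2 * v - 1).toNat by omega, pow_toNat_dvd_iff_norm_le, hzx,
      hx, ← zpow_natCast, ← zpow_mul, ← le_div_iff₀ (zpow_pos hp0 _), ← zpow_sub₀ hp0.ne']
    apply iff_of_eq
    congr 2
    ring
  · rw [show n - 2 * v - 1 = 0 by omega, pow_zero]
    simp only [one_dvd, iff_true]
    have hzn : ‖z‖ ≤ (p : ℝ) ^ (-n : ℤ) := by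
      simpa using (IsUltrametricDist.norm_add_le_max x (z - x)).trans
        (max_le (hx.trans_le (zpow_le_zpow_right₀ hp1.le (by omega))) hz)
    calc ‖y‖ * ‖z‖ ^ 2 ≤ ‖z‖ := by
          nlinarith [norm_le_one y, norm_le_one z, norm_nonneg y, norm_nonneg z,
            mul_nonneg (norm_nonneg y) (norm_nonneg z)]
      _ ≤ (p : ℝ) ^ (-n : ℤ) := hzn
      _ ≤ (p : ℝ) ^ (1 - n : ℤ) := zpow_le_zpow_right₀ hp1.le (by omega)

end PadicInt

/-- For `n ≥ 3`, `q ∈ 1 + 3ℤ_3` with `q ≢ 1 (mod 9)`, `a₀ ∈ 3ℤ_3`, `a₀ ≠ 0`,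
`v = v_3(a₀)`: if `ι_q(a₀) ≡ a₀ (mod 3^n)`, then for `c ∈ ℤ_3`,
`ι_q(c·a₀) ≡ c·a₀ (mod 3^n)` iff `c(c−1) ∈ 3^{n−2v−1}ℤ_3`. -/
theorem fixed_point_multiples (n : ℕ) (hn : 3 ≤ n)
    (q : ℤ_[3]) (hq1 : (3 : ℤ_[3]) ∣ q - 1) (hq9 : ¬ (9 : ℤ_[3]) ∣ q - 1)
    (ι : ℤ_[3] → ℤ_[3]) (hcont : Continuous ι)
    (hval : ∀ k : ℕ, ι k = ∑ i ∈ Finset.range k, q ^ i)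
    (a₀ : ℤ_[3]) (ha₀ : a₀ ≠ 0) (h3 : (3 : ℤ_[3]) ∣ a₀)
    (v : ℕ) (hv : a₀.valuation = (v : ℤ))
    (hfix : (3 : ℤ_[3]) ^ n ∣ ι a₀ - a₀) (c : ℤ_[3]) :
    (3 : ℤ_[3]) ^ n ∣ ι (c * a₀) - c * a₀ ↔
      (3 : ℤ_[3]) ^ (n - 2 * v - 1) ∣ c * (c - 1) := by
  have hq : ‖q - 1‖ = ((3 : ℕ) : ℝ)⁻¹ := by
    simpa using norm_eq_of_pow_dvd_of_not_pow_dvd (p := 3) (n := 1) (by simpa using hq1)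
      (by norm_num; simpa using hq9)
  have ha₀norm : ‖a₀‖ = ((3 : ℕ) : ℝ) ^ (-v : ℤ) := by rw [norm_eq_zpow_neg_valuation ha₀, hv]
  have hfix' : ((3 : ℕ) : ℤ_[3]) ^ n ∣ ι a₀ - a₀ := by simpa using hfix
  have hι : ((3 : ℕ) : ℤ_[3]) ∣ ι a₀ := by
    simpa using ((dvd_pow_self (3 : ℤ_[3]) (by omega : n ≠ 0)).trans hfix).add h3
  have hnat (k : ℕ) : (3 : ℤ_[3]) ^ n ∣ ι (k * a₀) - k * a₀ ↔
      (3 : ℤ_[3]) ^ (n - 2 * v - 1) ∣ (k : ℤ_[3]) * (k - 1) := by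
    simpa using (pow_dvd_apply_natCast_mul_sub_iff (by norm_num) hq hcont hval hι hfix' k).trans
      (norm_mul_sq_le_iff_pow_dvd ha₀norm (pow_dvd_iff_norm_le.1 hfix'))
  refine denseRange_natCast.induction_on c ?_ hnat
  simpa using isClosed_setOf_pow_dvd_iff_pow_dvd (p := 3)
    (f := fun c => ι (c * a₀) - c * a₀) (g := fun c => c * (c - 1)) (by fun_prop) (by fun_prop) n
    (n - 2 * v - 1)
end
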